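/- arXiv:1205.5473 — 5 statements merged into one kernel-verified Lean document; each statement's English description precedes it below -/
import Mathlib

section
/- Let B, B₀ be p×p real matrices with entries β_{k,j}, β⁰_{k,j}. Let s̃ = #{(k,j) : β⁰_{k,j} ≠ 0} and ŝ = #{(k,j) : β_{k,j} ≠ 0}. Suppose ‖B − B₀‖_F ≤ λ̃·√s̃ for some λ̃ > 0, and suppose that for constants 0 ≤ η₁ < 1 and 0 < η₂² < 1 − η₁ we have #{(k,j) : |β⁰_{k,j}| ≥ λ̃/η₂} ≥ (1 − η₁)·s̃. Then ŝ ≥ (1 − η₁ − η₂²)·s̃. -/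
open Finset in
theorem stmt_1 (p : ℕ) (B B₀ : Matrix (Fin p) (Fin p) ℝ)
    (lamt η₁ η₂ : ℝ) (hlam : 0 < lamt) (hη₁0 : 0 ≤ η₁) (hη₁1 : η₁ < 1)
    (hη₂0 : 0 < η₂) (hη₂ : η₂ ^ 2 < 1 - η₁)
    (st : ℕ) (hst : st = (Finset.univ.filter (fun kj : Fin p × Fin p => B₀ kj.1 kj.2 ≠ 0)).card)
    (sh : ℕ) (hsh : sh = (Finset.univ.filter (fun kj : Fin p × Fin p => B kj.1 kj.2 ≠ 0)).card)
    (hF : Real.sqrt (∑ k, ∑ j, (B k j - B₀ k j) ^ 2) ≤ lamt * Real.sqrt st)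
    (hbig : (1 - η₁) * st ≤
      ((Finset.univ.filter (fun kj : Fin p × Fin p => lamt / η₂ ≤ |B₀ kj.1 kj.2|)).card : ℝ)) :
    (1 - η₁ - η₂ ^ 2) * st ≤ (sh : ℝ) := by
  set Big := Finset.univ.filter (fun kj : Fin p × Fin p => lamt / η₂ ≤ |B₀ kj.1 kj.2|) with hBig
  set Z := Big.filter (fun kj : Fin p × Fin p => B kj.1 kj.2 = 0) with hZ
  have hZsub : Z ⊆ Big := Finset.filter_subset _ _
  have hsumnn : (0:ℝ) ≤ ∑ k, ∑ j, (B k j - B₀ k j) ^ 2 :=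
    Finset.sum_nonneg fun k _ => Finset.sum_nonneg fun j _ => sq_nonneg _
  have hsum : ∑ k, ∑ j, (B k j - B₀ k j) ^ 2 ≤ lamt ^ 2 * st := by
    have h1 : (Real.sqrt (∑ k, ∑ j, (B k j - B₀ k j) ^ 2)) ^ 2 ≤ (lamt * Real.sqrt st) ^ 2 :=
      pow_le_pow_left₀ (Real.sqrt_nonneg _) hF 2
    rwa [Real.sq_sqrt hsumnn, mul_pow, Real.sq_sqrt (Nat.cast_nonneg st)] at h1
  have hZsum : (Z.card : ℝ) * (lamt / η₂) ^ 2 ≤ ∑ k, ∑ j, (B k j - B₀ k j) ^ 2 := by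
    rw [← Finset.sum_product']
    calc (Z.card : ℝ) * (lamt / η₂) ^ 2 = ∑ _kj ∈ Z, (lamt / η₂) ^ 2 := by
          rw [Finset.sum_const, nsmul_eq_mul]
      _ ≤ ∑ kj ∈ Z, (B kj.1 kj.2 - B₀ kj.1 kj.2) ^ 2 := by
          apply Finset.sum_le_sum
          intro kj hkj
          simp only [hZ, hBig, Finset.mem_filter, Finset.mem_univ, true_and] at hkj
          obtain ⟨h1, h2⟩ := hkj
          have hle : (lamt / η₂) ^ 2 ≤ (B₀ kj.1 kj.2) ^ 2 := by
            rw [← sq_abs (B₀ kj.1 kj.2)]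
            exact pow_le_pow_left₀ (by positivity) h1 2
          rw [h2, zero_sub]
          simpa using hle
      _ ≤ ∑ kj ∈ (Finset.univ : Finset (Fin p × Fin p)), (B kj.1 kj.2 - B₀ kj.1 kj.2) ^ 2 :=
          Finset.sum_le_sum_of_subset_of_nonneg (Finset.subset_univ _)
            (fun _ _ _ => sq_nonneg _)
  have hZcard : (Z.card : ℝ) ≤ η₂ ^ 2 * st := by
    have hη2 : (0:ℝ) < η₂ ^ 2 := by positivity
    have hl2 : (0:ℝ) < lamt ^ 2 := by positivity
    have key := hZsum.trans hsum
    rw [div_pow, mul_div_assoc', div_le_iff₀ hη2] at key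
    exact le_of_mul_le_mul_right (by nlinarith [key]) hl2
  have hsubset : Big \ Z ⊆ Finset.univ.filter (fun kj : Fin p × Fin p => B kj.1 kj.2 ≠ 0) := by
    intro kj hkj
    simp only [hZ, Finset.mem_sdiff, Finset.mem_filter, Finset.mem_univ, true_and] at hkj ⊢
    tauto
  have hcard : (Big.card : ℝ) - Z.card ≤ sh := by
    rw [hsh, ← Nat.cast_sub (Finset.card_le_card hZsub), ← Finset.card_sdiff_of_subset hZsub]
    exact_mod_cast Finset.card_le_card hsubset
  have hBZ : (Z.card : ℝ) ≤ Big.card := by exact_mod_cast Finset.card_le_card hZsub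
  linarith [hbig, hZcard, hcard]
end

section
/- Let B, B₀ be p×p matrices with ŝ and s̃ nonzero entries respectively, and suppose δ_B·‖B − B₀‖_F² + λ²·δ_s·ŝ ≤ λ²·s₀ + λ₀²·s̃, where s̃ ≥ s₀, and δ_B, δ_s, λ², λ₀² > 0. Let λ̃² satisfy λ̃²·δ_B ≥ λ² + λ₀², and assume #{(k,j) : |β⁰_{k,j}| ≥ λ̃/η₂} ≥ (1 − η₁)·s̃ with 0 ≤ η₁ < 1 and 0 < η₂² < 1 − η₁. Then δ_B·‖B − B₀‖_F² + (λ²·δ_s − λ₀²/(1 − η₁ − η₂²))·ŝ ≤ λ²·s₀, and ŝ ≥ (1 − η₁ − η₂²)·s₀. -/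
set_option maxHeartbeats 1000000 in
open Finset in
theorem stmt_2 (p : ℕ) (B B₀ : Matrix (Fin p) (Fin p) ℝ)
    (δB δs lam lam₀ lamt η₁ η₂ : ℝ) (s₀ : ℕ)
    (hδB : 0 < δB) (hδs : 0 < δs) (hlam : 0 < lam ^ 2) (hlam₀ : 0 < lam₀ ^ 2)
    (hη₁0 : 0 ≤ η₁) (hη₁1 : η₁ < 1) (hη₂0 : 0 < η₂) (hη₂ : η₂ ^ 2 < 1 - η₁)
    (st : ℕ) (hst : st = (Finset.univ.filter (fun kj : Fin p × Fin p => B₀ kj.1 kj.2 ≠ 0)).card)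
    (sh : ℕ) (hsh : sh = (Finset.univ.filter (fun kj : Fin p × Fin p => B kj.1 kj.2 ≠ 0)).card)
    (hbasic : δB * (∑ k, ∑ j, (B k j - B₀ k j) ^ 2) + lam ^ 2 * δs * sh ≤
      lam ^ 2 * s₀ + lam₀ ^ 2 * st)
    (hs₀st : s₀ ≤ st)
    (hlamt : lam ^ 2 + lam₀ ^ 2 ≤ lamt ^ 2 * δB) (hlamtpos : 0 < lamt)
    (hbig : (1 - η₁) * st ≤
      ((Finset.univ.filter (fun kj : Fin p × Fin p => lamt / η₂ ≤ |B₀ kj.1 kj.2|)).card : ℝ)) :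
    δB * (∑ k, ∑ j, (B k j - B₀ k j) ^ 2) +
      (lam ^ 2 * δs - lam₀ ^ 2 / (1 - η₁ - η₂ ^ 2)) * sh ≤ lam ^ 2 * s₀ ∧
    (1 - η₁ - η₂ ^ 2) * s₀ ≤ (sh : ℝ) := by
  have hcpos : 0 < 1 - η₁ - η₂ ^ 2 := by linarith
  set S := (∑ k, ∑ j, (B k j - B₀ k j) ^ 2) with hS
  have hSnn : 0 ≤ S := by positivity
  set Sbig := Finset.univ.filter (fun kj : Fin p × Fin p => lamt / η₂ ≤ |B₀ kj.1 kj.2|) with hSb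
  set supp := Finset.univ.filter (fun kj : Fin p × Fin p => B kj.1 kj.2 ≠ 0) with hsupp
  -- each term on Sbig \ supp is at least (lamt/η₂)^2
  have hterm : ∀ kj ∈ Sbig \ supp, (lamt / η₂) ^ 2 ≤ (B kj.1 kj.2 - B₀ kj.1 kj.2) ^ 2 := by
    intro kj hkj
    rw [Finset.mem_sdiff, hSb, hsupp, Finset.mem_filter, Finset.mem_filter] at hkj
    obtain ⟨⟨-, h1⟩, h2⟩ := hkj
    have hB0 : B kj.1 kj.2 = 0 := by
      by_contra h
      exact h2 ⟨Finset.mem_univ kj, h⟩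
    rw [hB0, zero_sub, neg_sq]
    calc (lamt / η₂) ^ 2 ≤ |B₀ kj.1 kj.2| ^ 2 :=
          pow_le_pow_left₀ (le_of_lt (div_pos hlamtpos hη₂0)) h1 2
      _ = (B₀ kj.1 kj.2) ^ 2 := sq_abs _
  have hsum1 : ((Sbig \ supp).card : ℝ) * (lamt / η₂) ^ 2 ≤ S := by
    have h1 := Finset.card_nsmul_le_sum (Sbig \ supp)
      (fun kj => (B kj.1 kj.2 - B₀ kj.1 kj.2) ^ 2) ((lamt / η₂) ^ 2) hterm
    have heq : S = ∑ kj : Fin p × Fin p, (B kj.1 kj.2 - B₀ kj.1 kj.2) ^ 2 := by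
      rw [hS, Fintype.sum_prod_type]
    have h2 : ∑ kj ∈ Sbig \ supp, (B kj.1 kj.2 - B₀ kj.1 kj.2) ^ 2 ≤ S := by
      rw [heq]
      exact Finset.sum_le_sum_of_subset_of_nonneg (Finset.subset_univ _)
        (fun i _ _ => sq_nonneg _)
    rw [nsmul_eq_mul] at h1
    linarith
  have hcard : (Sbig.card : ℝ) - supp.card ≤ ((Sbig \ supp).card : ℝ) := by
    have h := Finset.card_le_card_sdiff_add_card (s := Sbig) (t := supp)
    have h' : (Sbig.card : ℝ) ≤ ((Sbig \ supp).card : ℝ) + supp.card := by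
      exact_mod_cast h
    linarith
  have hshsupp : (sh : ℝ) = supp.card := by rw [hsh]
  have hkey1 : ((1 - η₁) * st - sh) * (lamt / η₂) ^ 2 ≤ S := by
    have hA : (1 - η₁) * st - sh ≤ ((Sbig \ supp).card : ℝ) := by
      rw [hshsupp]; linarith
    calc ((1 - η₁) * st - sh) * (lamt / η₂) ^ 2
        ≤ ((Sbig \ supp).card : ℝ) * (lamt / η₂) ^ 2 :=
          mul_le_mul_of_nonneg_right hA (by positivity)
      _ ≤ S := hsum1
  have hshnn : (0 : ℝ) ≤ sh := Nat.cast_nonneg _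
  have hstnn : (0 : ℝ) ≤ st := Nat.cast_nonneg _
  have hs₀st' : (s₀ : ℝ) ≤ st := by exact_mod_cast hs₀st
  -- δB * S ≤ lamt^2 * δB * st
  have h2 : δB * S ≤ lamt ^ 2 * δB * st := by
    have hA := mul_le_mul_of_nonneg_right hlamt hstnn
    have hB' := mul_le_mul_of_nonneg_left hs₀st' hlam.le
    have hC : 0 ≤ lam ^ 2 * δs * sh := by positivity
    linarith
  -- key: (1 - η₁ - η₂^2) * st ≤ sh
  have hkey : (1 - η₁ - η₂ ^ 2) * st ≤ (sh : ℝ) := by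
    have hlt2 : (0 : ℝ) < lamt ^ 2 := pow_pos hlamtpos 2
    have hη₂2 : (0 : ℝ) < η₂ ^ 2 := pow_pos hη₂0 2
    have hdiv : (lamt / η₂) ^ 2 = lamt ^ 2 / η₂ ^ 2 := div_pow _ _ _
    rw [hdiv] at hkey1
    have h3 : δB * (((1 - η₁) * st - sh) * (lamt ^ 2 / η₂ ^ 2)) ≤ δB * S :=
      mul_le_mul_of_nonneg_left hkey1 hδB.le
    have h4 : δB * (((1 - η₁) * st - sh) * lamt ^ 2) ≤ lamt ^ 2 * δB * st * η₂ ^ 2 := by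
      have h5 := mul_le_mul_of_nonneg_right (le_trans h3 h2) hη₂2.le
      calc δB * (((1 - η₁) * st - sh) * lamt ^ 2)
          = δB * (((1 - η₁) * st - sh) * (lamt ^ 2 / η₂ ^ 2)) * η₂ ^ 2 := by
            field_simp
        _ ≤ lamt ^ 2 * δB * st * η₂ ^ 2 := h5
    nlinarith [mul_pos hlt2 hδB, h4]
  constructor
  · have hmul := mul_le_mul_of_nonneg_left hkey hlam₀.le
    have : lam₀ ^ 2 * st ≤ lam₀ ^ 2 / (1 - η₁ - η₂ ^ 2) * sh := by
      rw [div_mul_eq_mul_div, le_div_iff₀ hcpos]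
      nlinarith [hmul]
    linarith
  · calc (1 - η₁ - η₂ ^ 2) * s₀ ≤ (1 - η₁ - η₂ ^ 2) * st :=
        mul_le_mul_of_nonneg_left hs₀st' hcpos.le
      _ ≤ sh := hkey
end

section
/- Let V₁, ..., V_m be i.i.d. standard normal random variables. Then for all t > 0, P( Σ_{k=1}^m V_k² ≥ m + 2√(t·m) + 2t ) ≤ exp(−t). -/
/-!
Chernoff bound for `S = ∑ V_k²`: a squared standard Gaussian has moment generating function
`E[exp (l V²)] = (1 - 2l)^(-1/2)` for `l < 1/2`, so by independence
`P(S ≥ a) ≤ exp (-l a) (1 - 2l)^(-m/2)`. With `p = √m`, `q = √t`, `a = p² + 2pq + 2q²` and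
`l = q / (p + 2q)`, the estimate `log s ≥ (s - s⁻¹)/2` for `s = 1 - 2l ∈ (0, 1]`
(which is `u ≤ sinh u` for `u = -log s`) brings the exponent down to exactly `-q² = -t`.
-/

open Real MeasureTheory ProbabilityTheory
open scoped NNReal

lemma sub_inv_div_two_le_log {s : ℝ} (hs : 0 < s) (hs1 : s ≤ 1) :
    (s - s⁻¹) / 2 ≤ log s := by
  have h := self_le_sinh_iff.mpr (neg_nonneg.mpr (log_nonpos hs.le hs1))
  rw [sinh_eq, neg_neg, exp_neg, exp_log hs] at h
  linarith

/-- For `2 c v ≥ 1` both sides are junk zeros. -/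
lemma integral_exp_mul_sq_gaussianReal (v : ℝ≥0) (c : ℝ) :
    ∫ x, exp (c * x ^ 2) ∂gaussianReal 0 v = (√(1 - 2 * c * v))⁻¹ := by
  rcases eq_or_ne v 0 with rfl | hv
  · simp [gaussianReal_zero_var]
  calc ∫ x, exp (c * x ^ 2) ∂gaussianReal 0 v
      = ∫ x, (√(2 * π * v))⁻¹ * exp (-((2 * v : ℝ)⁻¹ - c) * x ^ 2) := by
        rw [integral_gaussianReal_eq_integral_smul hv]
        congr with x
        rw [gaussianPDFReal, smul_eq_mul, mul_assoc, ← exp_add]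
        congr 2
        field_simp
        ring
    _ = (√(2 * π * v))⁻¹ * √(π / ((2 * v : ℝ)⁻¹ - c)) := by
        rw [integral_const_mul, integral_gaussian]
    _ = (√(1 - 2 * c * v))⁻¹ := by
        rw [← sqrt_inv, ← sqrt_mul (by positivity), ← sqrt_inv]
        congr 1
        field_simp

section SquaredGaussian

variable {Ω : Type*} [MeasurableSpace Ω] {μ : Measure Ω} {X : Ω → ℝ} {v : ℝ≥0}

lemma mgf_sq_of_map_eq_gaussianReal (hX : μ.map X = gaussianReal 0 v) (t : ℝ) :
    mgf (fun ω ↦ X ω ^ 2) μ t = (√(1 - 2 * t * v))⁻¹ := by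
  have hX_meas : AEMeasurable X μ := aemeasurable_of_map_neZero (by rw [hX]; infer_instance)
  rw [← integral_exp_mul_sq_gaussianReal, ← hX, integral_map hX_meas (by fun_prop), mgf]

lemma integrable_exp_mul_sq_of_map_eq_gaussianReal (hX : μ.map X = gaussianReal 0 v) {t : ℝ}
    (ht : t * v < 1 / 2) : Integrable (fun ω ↦ exp (t * X ω ^ 2)) μ := by
  have : NeZero μ := ⟨fun h ↦ IsProbabilityMeasure.ne_zero _ (by simpa [h] using hX.symm)⟩
  rw [← mgf_pos_iff, mgf_sq_of_map_eq_gaussianReal hX]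
  exact inv_pos.mpr (sqrt_pos.mpr (by linarith))

end SquaredGaussian

lemma measureReal_sum_sq_ge_le_of_gaussianReal {Ω ι : Type*} [MeasurableSpace Ω] [Fintype ι]
    {μ : Measure Ω} {V : ι → Ω → ℝ} {v : ℝ≥0} (hmeas : ∀ k, Measurable (V k))
    (hgauss : ∀ k, μ.map (V k) = gaussianReal 0 v) (hindep : iIndepFun V μ)
    (a : ℝ) {l : ℝ} (hl0 : 0 ≤ l) (hl : l * v < 1 / 2) :
    μ.real {ω | a ≤ ∑ k, V k ω ^ 2} ≤
      exp (-l * a) * (√(1 - 2 * l * v))⁻¹ ^ Fintype.card ι := by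
  have := hindep.isProbabilityMeasure
  have hsq_meas : ∀ k, Measurable fun ω ↦ V k ω ^ 2 := fun k ↦ (hmeas k).pow_const 2
  have hsq_indep : iIndepFun (fun k ω ↦ V k ω ^ 2) μ :=
    hindep.comp (fun _ x ↦ x ^ 2) fun _ ↦ measurable_id.pow_const 2
  have hchernoff := measure_ge_le_exp_mul_mgf a hl0
    (hsq_indep.integrable_exp_mul_sum (s := Finset.univ) hsq_meas
      fun k _ ↦ integrable_exp_mul_sq_of_map_eq_gaussianReal (hgauss k) hl)
  rw [hsq_indep.mgf_sum hsq_meas] at hchernoff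
  simpa [Finset.sum_apply, mgf_sq_of_map_eq_gaussianReal (hgauss _)] using hchernoff

lemma exists_exp_mul_inv_sqrt_pow_le {m : ℕ} (hm : 0 < m) {t : ℝ} (ht : 0 < t) :
    ∃ l, 0 ≤ l ∧ l < 1 / 2 ∧
      exp (-l * (m + 2 * √(t * m) + 2 * t)) * (√(1 - 2 * l))⁻¹ ^ m ≤ exp (-t) := by
  set p := √(m : ℝ)
  set q := √t
  have hp : 0 < p := sqrt_pos.mpr (by exact_mod_cast hm)
  have hq : 0 < q := sqrt_pos.mpr ht
  have hm_sq : (m : ℝ) = p ^ 2 := (sq_sqrt m.cast_nonneg).symm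
  have ht_sq : t = q ^ 2 := (sq_sqrt ht.le).symm
  set l := q / (p + 2 * q) with hl_def
  set s := p / (p + 2 * q) with hs_def
  have hs_pos : 0 < s := by positivity
  have hs_le : s ≤ 1 := (div_le_one (by positivity)).mpr (by linarith)
  refine ⟨l, by positivity, by rw [hl_def, div_lt_iff₀ (by positivity)]; linarith, ?_⟩
  have hs : 1 - 2 * l = s := by rw [hl_def, hs_def]; field_simp; ring
  have key : l * (m + 2 * (q * p) + 2 * t) + m / 2 * ((s - s⁻¹) / 2) = t := by
    rw [hm_sq, ht_sq, hl_def, hs_def]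
    field_simp
    ring
  have hlog := mul_le_mul_of_nonneg_left (sub_inv_div_two_le_log hs_pos hs_le) m.cast_nonneg
  rw [hs, ← exp_log (sqrt_pos.mpr hs_pos), log_sqrt hs_pos.le, ← exp_neg, ← exp_nat_mul,
    ← exp_add, exp_le_exp, sqrt_mul ht.le]
  linarith

open ProbabilityTheory MeasureTheory in
theorem stmt_6 {Ω : Type*} [MeasurableSpace Ω] (μ : Measure Ω) [IsProbabilityMeasure μ]
    (m : ℕ) (V : Fin m → Ω → ℝ)
    (hmeas : ∀ k, Measurable (V k))
    (hgauss : ∀ k, Measure.map (V k) μ = gaussianReal 0 1)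
    (hindep : iIndepFun V μ)
    (t : ℝ) (ht : 0 < t) :
    μ {ω | (m : ℝ) + 2 * Real.sqrt (t * m) + 2 * t ≤ ∑ k, (V k ω) ^ 2} ≤
      ENNReal.ofReal (Real.exp (-t)) := by
  rcases Nat.eq_zero_or_pos m with rfl | hm
  · simp [(mul_pos two_pos ht).not_ge]
  obtain ⟨l, hl0, hl, hbound⟩ := exists_exp_mul_inv_sqrt_pow_le hm ht
  have hchernoff := measureReal_sum_sq_ge_le_of_gaussianReal hmeas hgauss hindep
    ((m : ℝ) + 2 * √(t * m) + 2 * t) hl0 (by simpa using hl)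
  rw [← ofReal_measureReal]
  exact ENNReal.ofReal_le_ofReal (hchernoff.trans (by simpa using hbound))
end

section
/- Let Σ₀ be p×p positive definite with smallest eigenvalue Λ_min² > 0 and maximal diagonal entry at most σ₀². Suppose for some permutation-dependent coefficient vector β̃⁰ ∈ ℝ^p (with zero j-th coordinate) and constants 0 ≤ η₁ < 1, η₀ > 0, n, p, the number s̃_j of nonzero coordinates of β̃⁰ satisfies: at least (1 − η₁)·s̃_j of those coordinates have absolute value greater than √(log p / n)·(√(p/s₀) ∨ 1)/η₀. If moreover (β̃⁰)ᵀ Σ₀ β̃⁰ ≤ σ₀², then s̃_j ≤ (σ₀²η₀²/(Λ_min²(1 − η₁)))·n/log p·(s₀/p ∧ 1). -/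
open Matrix in
theorem stmt_11 (p : ℕ) (hp : 2 ≤ p) (n : ℝ) (hn : 0 < n)
    (S0 : Matrix (Fin p) (Fin p) ℝ) (hpd : S0.PosDef)
    (Λmin σ₀ η₀ η₁ : ℝ) (hΛ : 0 < Λmin) (hη₀ : 0 < η₀) (hη₁0 : 0 ≤ η₁) (hη₁1 : η₁ < 1)
    (hmin : ∀ v : Fin p → ℝ, Λmin ^ 2 * ∑ k, (v k) ^ 2 ≤ v ⬝ᵥ (S0 *ᵥ v))
    (s₀ : ℕ) (hs₀ : 0 < s₀)
    (β : Fin p → ℝ) (j : Fin p) (hβj : β j = 0)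
    (sj : ℕ) (hsj : sj = (Finset.univ.filter (fun k => β k ≠ 0)).card)
    (hbig : (1 - η₁) * sj ≤
      ((Finset.univ.filter (fun k =>
        Real.sqrt (Real.log p / n) * max (Real.sqrt ((p : ℝ) / s₀)) 1 / η₀ < |β k|)).card : ℝ))
    (hquad : β ⬝ᵥ (S0 *ᵥ β) ≤ σ₀ ^ 2) :
    (sj : ℝ) ≤ σ₀ ^ 2 * η₀ ^ 2 / (Λmin ^ 2 * (1 - η₁)) * (n / Real.log p) *
      min ((s₀ : ℝ) / p) 1 := by
  have hp1 : (1 : ℝ) < p := by exact_mod_cast lt_of_lt_of_le one_lt_two hp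
  have hlog : 0 < Real.log p := Real.log_pos hp1
  have hppos : (0 : ℝ) < p := lt_trans one_pos hp1
  have hs₀pos : (0 : ℝ) < s₀ := by exact_mod_cast hs₀
  set c : ℝ := Real.sqrt (Real.log p / n) * max (Real.sqrt ((p : ℝ) / s₀)) 1 / η₀ with hc
  set M : ℝ := max ((p : ℝ) / s₀) 1 with hM
  have hMpos : 0 < M := lt_max_of_lt_right one_pos
  have hA : (0 : ℝ) < 1 - η₁ := by linarith
  have hc2 : c ^ 2 = (Real.log p / n) * M / η₀ ^ 2 := by
    rw [hc, div_pow, mul_pow, Real.sq_sqrt (by positivity)]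
    congr 1
    congr 1
    rcases le_total ((p : ℝ) / s₀) 1 with h | h
    · rw [hM, max_eq_right h, max_eq_right (by
        rw [show (1:ℝ) = Real.sqrt 1 by simp]
        exact Real.sqrt_le_sqrt h)]
      norm_num
    · rw [hM, max_eq_left h, max_eq_left (by
        rw [show (1:ℝ) = Real.sqrt 1 by simp]
        exact Real.sqrt_le_sqrt h)]
      exact Real.sq_sqrt (by positivity)
  have hcpos : 0 < c := by
    rw [hc]
    have h1 : 0 < Real.sqrt (Real.log p / n) := Real.sqrt_pos.mpr (by positivity)
    positivity
  set T := Finset.univ.filter (fun k =>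
    Real.sqrt (Real.log p / n) * max (Real.sqrt ((p : ℝ) / s₀)) 1 / η₀ < |β k|) with hT
  have h1 : (T.card : ℝ) * c ^ 2 ≤ ∑ k, β k ^ 2 := by
    calc (T.card : ℝ) * c ^ 2 = ∑ _k ∈ T, c ^ 2 := by
            rw [Finset.sum_const, nsmul_eq_mul]
      _ ≤ ∑ k ∈ T, β k ^ 2 := by
            apply Finset.sum_le_sum
            intro k hk
            have hk' : c < |β k| := (Finset.mem_filter.mp hk).2
            calc c ^ 2 ≤ |β k| ^ 2 := pow_le_pow_left₀ hcpos.le hk'.le 2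
              _ = β k ^ 2 := sq_abs _
      _ ≤ ∑ k, β k ^ 2 := Finset.sum_le_sum_of_subset_of_nonneg
            (Finset.filter_subset _ _) (by intro k _ _; positivity)
  have hsum : ∑ k, β k ^ 2 ≤ σ₀ ^ 2 / Λmin ^ 2 := by
    rw [le_div_iff₀ (by positivity)]
    calc (∑ k, β k ^ 2) * Λmin ^ 2 = Λmin ^ 2 * ∑ k, β k ^ 2 := by ring
      _ ≤ β ⬝ᵥ (S0 *ᵥ β) := hmin β
      _ ≤ σ₀ ^ 2 := hquad
  have key : (1 - η₁) * sj * c ^ 2 ≤ σ₀ ^ 2 / Λmin ^ 2 := by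
    calc (1 - η₁) * sj * c ^ 2 ≤ (T.card : ℝ) * c ^ 2 := by
          apply mul_le_mul_of_nonneg_right hbig (by positivity)
      _ ≤ ∑ k, β k ^ 2 := h1
      _ ≤ σ₀ ^ 2 / Λmin ^ 2 := hsum
  have hminM : min ((s₀ : ℝ) / p) 1 = M⁻¹ := by
    rcases le_total ((p : ℝ) / s₀) 1 with h | h
    · rw [hM, max_eq_right h]
      have : (1 : ℝ) ≤ (s₀ : ℝ) / p := by
        rw [le_div_iff₀ hppos]
        rw [div_le_one hs₀pos] at h
        linarith
      rw [min_eq_right this]; norm_num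
    · rw [hM, max_eq_left h]
      have h2 : (s₀ : ℝ) / p ≤ 1 := by
        rw [div_le_one hppos]
        rw [le_div_iff₀ hs₀pos] at h
        linarith
      rw [min_eq_left h2, ← one_div, one_div_div]
  rw [hminM]
  rw [hc2] at key
  rw [show σ₀ ^ 2 * η₀ ^ 2 / (Λmin ^ 2 * (1 - η₁)) * (n / Real.log p) * M⁻¹
      = (σ₀ ^ 2 / Λmin ^ 2) / ((1 - η₁) * (Real.log p / n * M / η₀ ^ 2)) by
    field_simp]
  rw [le_div_iff₀ (by positivity)]
  calc (sj : ℝ) * ((1 - η₁) * (Real.log p / n * M / η₀ ^ 2))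
      = (1 - η₁) * sj * (Real.log p / n * M / η₀ ^ 2) := by ring
    _ ≤ σ₀ ^ 2 / Λmin ^ 2 := key
end

section
/- Let ω̃₁², ..., ω̃_p² be positive reals with ω̃_j² ≤ σ₀² for all j and ∏_{j=1}^p ω̃_j² = 1 (equivalently Σ_j log ω̃_j² = 0). Then Σ_{j=1}^p (1 − ω̃_j²) ≤ −(1/(2σ₀⁴))·Σ_{j=1}^p (ω̃_j² − 1)², i.e., Σ_{j=1}^p (ω̃_j² − 1) ≥ (1/(2σ₀⁴))·Σ_{j=1}^p (ω̃_j² − 1)². -/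
/-!
Taking logarithms, `∏ j, w j = 1` becomes `∑ j, log (w j) = 0`. The function
`u ↦ u - 1 - (u - 1)² / (2 c²) - log u` vanishes at `1` and has derivative
`(u - 1)(c² - u) / (u c²)`, so for `c ≥ 1` it is nonnegative on `(0, c]`. Summing the resulting bound
`log (w j) ≤ (w j - 1) - (w j - 1)² / (2 c²)` over `j` gives the claim with `c = σ₀²`; that `σ₀² ≥ 1`
follows because some `w j` is at least `1`.
-/

open Real Finset

lemma hasDerivAt_sub_one_sub_sq_div_sub_log {c u : ℝ} (hc : c ≠ 0) (hu : 0 < u) :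
    HasDerivAt (fun u => u - 1 - (u - 1) ^ 2 / (2 * c ^ 2) - log u)
      ((u - 1) * (c ^ 2 - u) / (u * c ^ 2)) u := by
  have h₁ : HasDerivAt (fun u : ℝ => u - 1) 1 u := (hasDerivAt_id u).sub_const 1
  refine ((h₁.sub ((h₁.pow 2).div_const (2 * c ^ 2))).sub (hasDerivAt_log hu.ne')).congr_deriv ?_
  field_simp
  ring

lemma log_le_sub_one_sub_sq_div {c t : ℝ} (hc : 1 ≤ c) (ht : 0 < t) (htc : t ≤ c) :
    log t ≤ t - 1 - (t - 1) ^ 2 / (2 * c ^ 2) := by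
  set g : ℝ → ℝ := fun u => u - 1 - (u - 1) ^ 2 / (2 * c ^ 2) - log u
  have hc0 : c ≠ 0 := by positivity
  have hderiv : ∀ u, 0 < u → HasDerivAt g ((u - 1) * (c ^ 2 - u) / (u * c ^ 2)) u :=
    fun u hu => hasDerivAt_sub_one_sub_sq_div_sub_log hc0 hu
  have hcont : ∀ a b, 0 < a → ContinuousOn g (Set.Icc a b) := fun a b ha u hu =>
    (hderiv u (ha.trans_le hu.1)).continuousAt.continuousWithinAt
  have hderivWithin : ∀ a b, 0 < a → ∀ u ∈ interior (Set.Icc a b),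
      HasDerivWithinAt g ((u - 1) * (c ^ 2 - u) / (u * c ^ 2)) (interior (Set.Icc a b)) u :=
    fun a b ha u hu => by
      rw [interior_Icc] at hu
      exact (hderiv u (ha.trans hu.1)).hasDerivWithinAt
  have hc_le_sq : c ≤ c ^ 2 := by nlinarith
  suffices 0 ≤ g t by simp only [g] at this; linarith
  have hg1 : g 1 = 0 := by simp [g]
  rcases le_total 1 t with h1t | ht1
  · have hmono : MonotoneOn g (Set.Icc 1 c) :=
      monotoneOn_of_hasDerivWithinAt_nonneg (convex_Icc 1 c) (hcont 1 c one_pos)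
        (hderivWithin 1 c one_pos) fun u hu => by
          rw [interior_Icc] at hu
          have : 0 < u := one_pos.trans hu.1
          exact div_nonneg (mul_nonneg (by linarith [hu.1]) (by linarith [hu.2])) (by positivity)
    simpa [hg1] using hmono ⟨le_rfl, h1t.trans htc⟩ ⟨h1t, htc⟩ h1t
  · have hanti : AntitoneOn g (Set.Icc t 1) :=
      antitoneOn_of_hasDerivWithinAt_nonpos (convex_Icc t 1) (hcont t 1 ht)
        (hderivWithin t 1 ht) fun u hu => by
          rw [interior_Icc] at hu
          have : 0 < u := ht.trans hu.1
          exact div_nonpos_of_nonpos_of_nonneg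
            (mul_nonpos_of_nonpos_of_nonneg (by linarith [hu.2]) (by linarith [hu.2]))
            (by positivity)
    simpa [hg1] using hanti ⟨le_rfl, ht1⟩ ⟨ht1, le_rfl⟩ ht1

lemma Finset.exists_one_le_of_prod_eq_one {ι : Type*} {s : Finset ι} {w : ι → ℝ}
    (hs : s.Nonempty) (hpos : ∀ i ∈ s, 0 < w i) (hprod : ∏ i ∈ s, w i = 1) :
    ∃ i ∈ s, 1 ≤ w i := by
  have hlog : ∑ i ∈ s, log (w i) = ∑ i ∈ s, (0 : ℝ) := by
    rw [← log_prod fun i hi => (hpos i hi).ne', hprod, log_one, sum_const_zero]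
  obtain ⟨i, hi, h⟩ := exists_le_of_sum_le hs hlog.ge
  exact ⟨i, hi, (log_nonneg_iff (hpos i hi)).mp h⟩

lemma Finset.one_div_mul_sum_sq_sub_one_le_sum_sub_one {ι : Type*} {s : Finset ι} {w : ι → ℝ}
    {c : ℝ} (hc : 1 ≤ c) (hpos : ∀ i ∈ s, 0 < w i) (hle : ∀ i ∈ s, w i ≤ c)
    (hprod : ∏ i ∈ s, w i = 1) :
    1 / (2 * c ^ 2) * ∑ i ∈ s, (w i - 1) ^ 2 ≤ ∑ i ∈ s, (w i - 1) := by
  have hlog : ∑ i ∈ s, log (w i) = 0 := by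
    rw [← log_prod fun i hi => (hpos i hi).ne', hprod, log_one]
  have hsum : ∑ i ∈ s, log (w i) ≤ ∑ i ∈ s, (w i - 1 - (w i - 1) ^ 2 / (2 * c ^ 2)) :=
    sum_le_sum fun i hi => log_le_sub_one_sub_sq_div hc (hpos i hi) (hle i hi)
  rw [hlog, sum_sub_distrib, ← sum_div] at hsum
  rw [one_div_mul_eq_div]
  linarith

theorem stmt_18 (p : ℕ) (σ₀ : ℝ) (w : Fin p → ℝ)
    (hwpos : ∀ j, 0 < w j) (hwle : ∀ j, w j ≤ σ₀ ^ 2)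
    (hprod : ∏ j, w j = 1) :
    (1 / (2 * σ₀ ^ 4)) * ∑ j, (w j - 1) ^ 2 ≤ ∑ j, (w j - 1) := by
  rcases isEmpty_or_nonempty (Fin p) with hp | hp
  · simp
  obtain ⟨j, -, hj⟩ := exists_one_le_of_prod_eq_one univ_nonempty (fun j _ => hwpos j) hprod
  have h := one_div_mul_sum_sq_sub_one_le_sum_sub_one (hj.trans (hwle j))
    (fun j _ => hwpos j) (fun j _ => hwle j) hprod
  rwa [← pow_mul] at h
end
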